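/- For every LTL formula Φ in the syntactic class TL_F, there exists a deterministic ω-automaton A over the alphabet 2^V with a liveness acceptance condition (given by a set F of states, a run is accepting iff it visits F at least once) such that A has at most 2^(2^|Φ|) states and A accepts exactly the set of infinite words w with w ⊨ Φ. -/
import Mathlib


/-- LTL formulas over atomic propositions `V`: the constant `true`, variables,
negation, disjunction, next (`X`), and strong until (`SU`). -/
inductive LTL (V : Type) : Type
  | tt : LTL V
  | var : V → LTL V
  | lnot : LTL V → LTL V
  | lor : LTL V → LTL V → LTL V
  | lnext : LTL V → LTL V
  | lsu : LTL V → LTL V → LTL V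

namespace LTL

variable {V : Type}

/-- Semantics: `Sat w φ i` means `w, i ⊨ φ` for an infinite word `w : ℕ → Set V`.
In particular `w, i ⊨ ψ SU φ` iff there is `k ≥ i` with `w, k ⊨ ψ` and
`w, j ⊨ φ` for all `i ≤ j < k`. -/
def Sat (w : ℕ → Set V) : LTL V → ℕ → Prop
  | tt, _ => True
  | var v, i => v ∈ w i
  | lnot φ, i => ¬ Sat w φ i
  | lor φ ψ, i => Sat w φ i ∨ Sat w ψ i
  | lnext φ, i => Sat w φ (i + 1)
  | lsu ψ φ, i => ∃ k, i ≤ k ∧ Sat w ψ k ∧ ∀ j, i ≤ j → j < k → Sat w φ j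

/-- Conjunction, as the abbreviation `¬(¬φ ∨ ¬ψ)`. -/
def land (φ ψ : LTL V) : LTL V := lnot (lor (lnot φ) (lnot ψ))

/-- `F φ := φ SU true`. -/
def lF (φ : LTL V) : LTL V := lsu φ tt

/-- `G φ := ¬ F ¬ φ`. -/
def lG (φ : LTL V) : LTL V := lnot (lF (lnot φ))

/-- Weak until: `ψ U φ := (ψ SU φ) ∨ G φ`. -/
def lwu (ψ φ : LTL V) : LTL V := lor (lsu ψ φ) (lG φ)

/-- Number of nodes of the syntax tree. -/
def size : LTL V → ℕ
  | tt => 1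
  | var _ => 1
  | lnot φ => size φ + 1
  | lor φ ψ => size φ + size ψ + 1
  | lnext φ => size φ + 1
  | lsu ψ φ => size ψ + size φ + 1

mutual
  /-- The syntactic class `TL_G`. -/
  inductive TLG : LTL V → Prop
    | var (v : V) : TLG (LTL.var v)
    | not {φ : LTL V} : TLF φ → TLG (LTL.lnot φ)
    | and {φ ψ : LTL V} : TLG φ → TLG ψ → TLG (LTL.land φ ψ)
    | or {φ ψ : LTL V} : TLG φ → TLG ψ → TLG (LTL.lor φ ψ)
    | next {φ : LTL V} : TLG φ → TLG (LTL.lnext φ)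
    | alw {φ : LTL V} : TLG φ → TLG (LTL.lG φ)
    | wu {ψ φ : LTL V} : TLG ψ → TLG φ → TLG (LTL.lwu ψ φ)
  /-- The syntactic class `TL_F`. -/
  inductive TLF : LTL V → Prop
    | var (v : V) : TLF (LTL.var v)
    | not {φ : LTL V} : TLG φ → TLF (LTL.lnot φ)
    | and {φ ψ : LTL V} : TLF φ → TLF ψ → TLF (LTL.land φ ψ)
    | or {φ ψ : LTL V} : TLF φ → TLF ψ → TLF (LTL.lor φ ψ)
    | next {φ : LTL V} : TLF φ → TLF (LTL.lnext φ)
    | ev {φ : LTL V} : TLF φ → TLF (LTL.lF φ)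
    | su {ψ φ : LTL V} : TLF ψ → TLF φ → TLF (LTL.lsu ψ φ)
end

end LTL

/-- The unique run of a deterministic automaton with transition function `δ`
and initial state `s0` on the infinite word `w`. -/
def detRun {S A : Type} (δ : S → A → S) (s0 : S) (w : ℕ → A) : ℕ → S
  | 0 => s0
  | t + 1 => δ (detRun δ s0 w t) (w t)

section Aux

namespace LTL

attribute [local instance 10] Classical.propDecidable

variable {V : Type}

/-- One-step unrolling evaluation. -/
noncomputable def step : LTL V → Set V → (LTL V → Bool) → Bool
  | tt, _, _ => true
  | var x, σ, _ => decide (x ∈ σ)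
  | lnot φ, σ, v => ! step φ σ v
  | lor φ ψ, σ, v => step φ σ v || step ψ σ v
  | lnext φ, _, v => v φ
  | lsu ψ φ, σ, v => step ψ σ v || (step φ σ v && v (lsu ψ φ))

/-- The set of subformulas of a formula (including itself). -/
noncomputable def subf : LTL V → Finset (LTL V)
  | tt => {tt}
  | var x => {var x}
  | lnot φ => insert (lnot φ) (subf φ)
  | lor φ ψ => insert (lor φ ψ) (subf φ ∪ subf ψ)
  | lnext φ => insert (lnext φ) (subf φ)
  | lsu ψ φ => insert (lsu ψ φ) (subf ψ ∪ subf φ)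

lemma mem_subf_self (χ : LTL V) : χ ∈ subf χ := by
  cases χ <;> simp [subf]

lemma subf_closed : ∀ χ ψ : LTL V, ψ ∈ subf χ → subf ψ ⊆ subf χ := by
  intro χ
  induction χ with
  | tt => intro ψ h; simp [subf] at h; subst h; simp [subf]
  | var x => intro ψ h; simp [subf] at h; subst h; simp [subf]
  | lnot φ ih =>
      intro ψ h
      simp [subf] at h
      rcases h with h | h
      · subst h; exact subset_rfl
      · exact (ih ψ h).trans (Finset.subset_insert _ _)
  | lor φ₁ φ₂ ih1 ih2 =>
      intro ψ h
      simp [subf] at h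
      rcases h with h | h | h
      · subst h; exact subset_rfl
      · exact ((ih1 ψ h).trans Finset.subset_union_left).trans (Finset.subset_insert _ _)
      · exact ((ih2 ψ h).trans Finset.subset_union_right).trans (Finset.subset_insert _ _)
  | lnext φ ih =>
      intro ψ h
      simp [subf] at h
      rcases h with h | h
      · subst h; exact subset_rfl
      · exact (ih ψ h).trans (Finset.subset_insert _ _)
  | lsu φ₁ φ₂ ih1 ih2 =>
      intro ψ h
      simp [subf] at h
      rcases h with h | h | h
      · subst h; exact subset_rfl
      · exact ((ih1 ψ h).trans Finset.subset_union_left).trans (Finset.subset_insert _ _)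
      · exact ((ih2 ψ h).trans Finset.subset_union_right).trans (Finset.subset_insert _ _)

lemma card_subf_le (χ : LTL V) : (subf χ).card ≤ size χ := by
  induction χ with
  | tt => simp [subf, size]
  | var x => simp [subf, size]
  | lnot φ ih =>
      calc (subf (lnot φ)).card ≤ (subf φ).card + 1 := Finset.card_insert_le _ _
        _ ≤ size φ + 1 := by omega
  | lor φ₁ φ₂ ih1 ih2 =>
      calc (subf (lor φ₁ φ₂)).card ≤ (subf φ₁ ∪ subf φ₂).card + 1 := Finset.card_insert_le _ _
        _ ≤ ((subf φ₁).card + (subf φ₂).card) + 1 :=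
            Nat.add_le_add_right (Finset.card_union_le _ _) 1
        _ ≤ size φ₁ + size φ₂ + 1 := by omega
  | lnext φ ih =>
      calc (subf (lnext φ)).card ≤ (subf φ).card + 1 := Finset.card_insert_le _ _
        _ ≤ size φ + 1 := by omega
  | lsu φ₁ φ₂ ih1 ih2 =>
      calc (subf (lsu φ₁ φ₂)).card ≤ (subf φ₁ ∪ subf φ₂).card + 1 := Finset.card_insert_le _ _
        _ ≤ ((subf φ₁).card + (subf φ₂).card) + 1 :=
            Nat.add_le_add_right (Finset.card_union_le _ _) 1
        _ ≤ size φ₁ + size φ₂ + 1 := by omega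

lemma step_congr {σ : Set V} : ∀ (χ : LTL V) (v₁ v₂ : LTL V → Bool),
    (∀ ψ ∈ subf χ, v₁ ψ = v₂ ψ) → step χ σ v₁ = step χ σ v₂ := by
  intro χ
  induction χ with
  | tt => intro v₁ v₂ h; simp [step]
  | var x => intro v₁ v₂ h; simp [step]
  | lnot φ ih =>
      intro v₁ v₂ h
      simp only [step]
      rw [ih v₁ v₂ (fun ψ hψ => h ψ (Finset.mem_insert_of_mem hψ))]
  | lor φ₁ φ₂ ih1 ih2 =>
      intro v₁ v₂ h
      simp only [step]
      rw [ih1 v₁ v₂ (fun ψ hψ => h ψ (by simp [subf]; tauto)),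
          ih2 v₁ v₂ (fun ψ hψ => h ψ (by simp [subf]; tauto))]
  | lnext φ ih =>
      intro v₁ v₂ h
      simp only [step]
      exact h φ (by simp [subf, mem_subf_self])
  | lsu φ₁ φ₂ ih1 ih2 =>
      intro v₁ v₂ h
      simp only [step]
      rw [ih1 v₁ v₂ (fun ψ hψ => h ψ (by simp [subf]; tauto)),
          ih2 v₁ v₂ (fun ψ hψ => h ψ (by simp [subf]; tauto)),
          h (lsu φ₁ φ₂) (mem_subf_self _)]

lemma sat_lsu_iff (w : ℕ → Set V) (ψ φ : LTL V) (i : ℕ) :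
    Sat w (lsu ψ φ) i ↔ Sat w ψ i ∨ (Sat w φ i ∧ Sat w (lsu ψ φ) (i + 1)) := by
  constructor
  · rintro ⟨k, hik, hk, hall⟩
    rcases Nat.eq_or_lt_of_le hik with h | h
    · left; rwa [h]
    · right
      refine ⟨hall i le_rfl h, k, h, hk, fun j hj1 hj2 => hall j (by omega) hj2⟩
  · rintro (h | ⟨h1, k, hik, hk, hall⟩)
    · exact ⟨i, le_rfl, h, fun j h1 h2 => absurd (lt_of_le_of_lt h1 h2) (lt_irrefl _)⟩
    · refine ⟨k, by omega, hk, fun j hj1 hj2 => ?_⟩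
      rcases Nat.eq_or_lt_of_le hj1 with h | h
      · rwa [← h]
      · exact hall j (by omega) hj2

lemma dec_iff {p q : Prop} [Decidable p] [Decidable q] (h : p ↔ q) :
    decide p = decide q := by
  by_cases hp : p
  · rw [decide_eq_true hp, decide_eq_true (h.mp hp)]
  · rw [decide_eq_false hp, decide_eq_false (fun hq => hp (h.mpr hq))]

lemma my_decide_not {p : Prop} [Decidable p] [Decidable (¬ p)] :
    decide (¬ p) = !decide p := by
  by_cases h : p
  · rw [decide_eq_true h, decide_eq_false (not_not_intro h)]; rfl
  · rw [decide_eq_false h, decide_eq_true h]; rfl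

lemma my_decide_or {p q : Prop} [Decidable p] [Decidable q] [Decidable (p ∨ q)] :
    decide (p ∨ q) = (decide p || decide q) := by
  by_cases hp : p
  · rw [decide_eq_true hp, decide_eq_true (Or.inl hp : p ∨ q)]; rfl
  · by_cases hq : q
    · rw [decide_eq_true hq, decide_eq_true (Or.inr hq : p ∨ q), decide_eq_false hp]; rfl
    · rw [decide_eq_false hp, decide_eq_false hq,
        decide_eq_false (fun h : p ∨ q => h.elim hp hq)]; rfl

lemma my_decide_and {p q : Prop} [Decidable p] [Decidable q] [Decidable (p ∧ q)] :
    decide (p ∧ q) = (decide p && decide q) := by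
  by_cases hp : p
  · by_cases hq : q
    · rw [decide_eq_true hp, decide_eq_true hq, decide_eq_true (And.intro hp hq)]; rfl
    · rw [decide_eq_true hp, decide_eq_false hq,
        decide_eq_false (fun h : p ∧ q => hq h.2)]; rfl
  · rw [decide_eq_false hp, decide_eq_false (fun h : p ∧ q => hp h.1)]; rfl

lemma step_sat (w : ℕ → Set V) (t : ℕ) : ∀ χ : LTL V,
    step χ (w t) (fun ψ => decide (Sat w ψ (t + 1))) = decide (Sat w χ t) := by
  intro χ
  induction χ with
  | tt => exact (decide_eq_true (by trivial : Sat w LTL.tt t)).symm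
  | var x => exact rfl
  | lnot φ ih =>
      simp only [step, ih]
      rw [dec_iff (show Sat w (lnot φ) t ↔ ¬ Sat w φ t from Iff.rfl), my_decide_not]
  | lor φ₁ φ₂ ih1 ih2 =>
      simp only [step, ih1, ih2]
      rw [dec_iff (show Sat w (lor φ₁ φ₂) t ↔ (Sat w φ₁ t ∨ Sat w φ₂ t) from Iff.rfl),
        my_decide_or]
  | lnext φ ih =>
      simp only [step]
      rfl
  | lsu φ₁ φ₂ ih1 ih2 =>
      simp only [step, ih1, ih2]
      rw [dec_iff (sat_lsu_iff w φ₁ φ₂ t), my_decide_or, my_decide_and]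

/-- Evaluation of a formula at time `i` over the segment `w i, …, w (i+k-1)`,
with the valuation `v` used as a summary of the future at time `i + k`. -/
noncomputable def seg (w : ℕ → Set V) (v : LTL V → Bool) : ℕ → ℕ → LTL V → Bool
  | _, 0 => v
  | i, k + 1 => fun χ => step χ (w i) (seg w v (i + 1) k)

lemma seg_congr (w : ℕ → Set V) : ∀ (k i : ℕ) (χ : LTL V) (v₁ v₂ : LTL V → Bool),
    (∀ ψ ∈ subf χ, v₁ ψ = v₂ ψ) → seg w v₁ i k χ = seg w v₂ i k χ := by
  intro k
  induction k with
  | zero => intro i χ v₁ v₂ h; exact h χ (mem_subf_self χ)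
  | succ k ih =>
      intro i χ v₁ v₂ h
      simp only [seg]
      exact step_congr χ _ _ (fun ψ hψ => ih (i+1) ψ v₁ v₂
        (fun ρ hρ => h ρ (subf_closed χ ψ hψ hρ)))

lemma seg_comp (w : ℕ → Set V) (v : LTL V → Bool) (m : ℕ) :
    ∀ (k i : ℕ) (χ : LTL V), seg w v i (k + m) χ = seg w (seg w v (i + k) m) i k χ := by
  intro k
  induction k with
  | zero => intro i χ; simp [seg]
  | succ k ih =>
      intro i χ
      have h1 : k + 1 + m = (k + m) + 1 := by omega
      rw [h1]
      simp only [seg]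
      congr 1
      funext ρ
      rw [ih (i+1) ρ]
      have : i + 1 + k = i + (k + 1) := by omega
      rw [this]

lemma seg_mono (w : ℕ → Set V) {i k : ℕ} {χ : LTL V} {b : Bool}
    (h : ∀ v, seg w v i k χ = b) {K : ℕ} (hK : k ≤ K) :
    ∀ v, seg w v i K χ = b := by
  intro v
  have : K = k + (K - k) := by omega
  rw [this, seg_comp]
  exact h _

lemma seg_truth (w : ℕ → Set V) : ∀ (k i : ℕ) (χ : LTL V),
    seg w (fun ψ => decide (Sat w ψ (i + k))) i k χ = decide (Sat w χ i) := by
  intro k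
  induction k with
  | zero =>
      intro i χ
      show decide (Sat w χ (i + 0)) = decide (Sat w χ i)
      rw [Nat.add_zero]
  | succ k ih =>
      intro i χ
      simp only [seg]
      have : (seg w (fun ψ => decide (Sat w ψ (i + (k + 1)))) (i + 1) k) =
          (fun ψ => decide (Sat w ψ (i + 1))) := by
        funext ψ
        have h2 : i + (k + 1) = (i + 1) + k := by omega
        rw [h2]
        exact ih (i+1) ψ
      rw [this, step_sat]

end LTL

end Aux

section Aux2

namespace LTL

attribute [local instance 10] Classical.propDecidable

variable {V : Type}

lemma seg_tt (w : ℕ → Set V) (v : LTL V → Bool) (i k : ℕ) :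
    seg w v i (k + 1) (tt : LTL V) = true := by
  simp [seg, step]

lemma seg_var (w : ℕ → Set V) (v : LTL V → Bool) (i k : ℕ) (x : V) :
    seg w v i (k + 1) (var x) = decide (x ∈ w i) := by
  simp [seg, step]

lemma seg_lnot (w : ℕ → Set V) (v : LTL V → Bool) (i k : ℕ) (φ : LTL V) :
    seg w v i (k + 1) (lnot φ) = ! seg w v i (k + 1) φ := by
  simp [seg, step]

lemma seg_lor (w : ℕ → Set V) (v : LTL V → Bool) (i k : ℕ) (φ ψ : LTL V) :
    seg w v i (k + 1) (lor φ ψ) = (seg w v i (k + 1) φ || seg w v i (k + 1) ψ) := by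
  simp [seg, step]

lemma seg_land (w : ℕ → Set V) (v : LTL V → Bool) (i k : ℕ) (φ ψ : LTL V) :
    seg w v i (k + 1) (land φ ψ) = (seg w v i (k + 1) φ && seg w v i (k + 1) ψ) := by
  simp [land, seg, step]

lemma seg_lnext (w : ℕ → Set V) (v : LTL V → Bool) (i k : ℕ) (φ : LTL V) :
    seg w v i (k + 1) (lnext φ) = seg w v (i + 1) k φ := by
  simp [seg, step]

lemma seg_lsu (w : ℕ → Set V) (v : LTL V → Bool) (i k : ℕ) (ψ φ : LTL V) :
    seg w v i (k + 1) (lsu ψ φ) =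
      (seg w v i (k + 1) ψ ||
        (seg w v i (k + 1) φ && seg w v (i + 1) k (lsu ψ φ))) := by
  simp [seg, step]

lemma su_true_aux (w : ℕ → Set V) (ψ φ : LTL V) (k : ℕ)
    (hψ : ∃ m, ∀ v, seg w v k m ψ = true) :
    ∀ d i, i + d = k →
      (∀ j, i ≤ j → j < k → ∃ m, ∀ v, seg w v j m φ = true) →
      ∃ m, ∀ v, seg w v i m (lsu ψ φ) = true := by
  intro d
  induction d with
  | zero =>
      intro i hi hφ
      have hik : i = k := by omega
      subst hik
      obtain ⟨m, hm⟩ := hψ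
      refine ⟨m + 1, fun v => ?_⟩
      rw [seg_lsu, seg_mono w hm (Nat.le_succ m) v]
      simp
  | succ d ihd =>
      intro i hi hφ
      obtain ⟨m2, hm2⟩ := hφ i le_rfl (by omega)
      obtain ⟨m1, hm1⟩ := ihd (i + 1) (by omega) (fun j hj1 hj2 => hφ j (by omega) hj2)
      refine ⟨max m1 m2 + 1, fun v => ?_⟩
      rw [seg_lsu,
        seg_mono w hm2 (le_trans (le_max_right m1 m2) (Nat.le_succ _)) v,
        seg_mono w hm1 (le_max_left m1 m2) _]
      simp

lemma su_false_aux (w : ℕ → Set V) (ψ φ : LTL V) (k : ℕ)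
    (hφ : ∃ m, ∀ v, seg w v k m φ = false) :
    ∀ d i, i + d = k →
      (∀ j, i ≤ j → j ≤ k → ∃ m, ∀ v, seg w v j m ψ = false) →
      ∃ m, ∀ v, seg w v i m (lsu ψ φ) = false := by
  intro d
  induction d with
  | zero =>
      intro i hi hψ
      have hik : i = k := by omega
      subst hik
      obtain ⟨m1, hm1⟩ := hψ i le_rfl (le_of_eq hi)
      obtain ⟨m2, hm2⟩ := hφ
      refine ⟨max m1 m2 + 1, fun v => ?_⟩
      rw [seg_lsu,
        seg_mono w hm1 (le_trans (le_max_left m1 m2) (Nat.le_succ _)) v,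
        seg_mono w hm2 (le_trans (le_max_right m1 m2) (Nat.le_succ _)) v]
      simp
  | succ d ihd =>
      intro i hi hψ
      obtain ⟨m2, hm2⟩ := hψ i le_rfl (by omega)
      obtain ⟨m1, hm1⟩ := ihd (i + 1) (by omega) (fun j hj1 hj2 => hψ j (by omega) hj2)
      refine ⟨max m1 m2 + 1, fun v => ?_⟩
      rw [seg_lsu,
        seg_mono w hm2 (le_trans (le_max_right m1 m2) (Nat.le_succ _)) v,
        seg_mono w hm1 (le_max_left m1 m2) _]
      simp

end LTL

end Aux2

section Aux3

namespace LTL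

attribute [local instance 10] Classical.propDecidable

variable {V : Type}

lemma tlf_seg_true {Φ : LTL V} (hΦ : TLF Φ) :
    ∀ (w : ℕ → Set V) (i : ℕ), Sat w Φ i → ∃ k, ∀ v, seg w v i k Φ = true := by
  refine LTL.TLF.rec
    (motive_1 := fun φ _ => ∀ (w : ℕ → Set V) (i : ℕ), ¬ Sat w φ i →
      ∃ k, ∀ v : LTL V → Bool, seg w v i k φ = false)
    (motive_2 := fun φ _ => ∀ (w : ℕ → Set V) (i : ℕ), Sat w φ i →
      ∃ k, ∀ v : LTL V → Bool, seg w v i k φ = true)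
    ?_ ?_ ?_ ?_ ?_ ?_ ?_ ?_ ?_ ?_ ?_ ?_ ?_ ?_ hΦ
  -- TLG.var
  · intro x w i h
    refine ⟨1, fun v => ?_⟩
    rw [seg_var]
    exact decide_eq_false h
  -- TLG.not
  · intro φ a ih w i h
    have hs : Sat w φ i := not_not.mp h
    obtain ⟨m, hm⟩ := ih w i hs
    refine ⟨m + 1, fun v => ?_⟩
    rw [seg_lnot, seg_mono w hm (Nat.le_succ m) v]
    rfl
  -- TLG.and
  · intro φ ψ a b ihφ ihψ w i h
    have hd : ¬ Sat w φ i ∨ ¬ Sat w ψ i := not_not.mp h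
    rcases hd with hd | hd
    · obtain ⟨m, hm⟩ := ihφ w i hd
      refine ⟨m + 1, fun v => ?_⟩
      rw [seg_land, seg_mono w hm (Nat.le_succ m) v]
      simp
    · obtain ⟨m, hm⟩ := ihψ w i hd
      refine ⟨m + 1, fun v => ?_⟩
      rw [seg_land, seg_mono w hm (Nat.le_succ m) v]
      simp
  -- TLG.or
  · intro φ ψ a b ihφ ihψ w i h
    have h1 : ¬ Sat w φ i := fun hx => h (Or.inl hx)
    have h2 : ¬ Sat w ψ i := fun hx => h (Or.inr hx)
    obtain ⟨m1, hm1⟩ := ihφ w i h1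
    obtain ⟨m2, hm2⟩ := ihψ w i h2
    refine ⟨max m1 m2 + 1, fun v => ?_⟩
    rw [seg_lor,
      seg_mono w hm1 (le_trans (le_max_left m1 m2) (Nat.le_succ _)) v,
      seg_mono w hm2 (le_trans (le_max_right m1 m2) (Nat.le_succ _)) v]
    rfl
  -- TLG.next
  · intro φ a ih w i h
    have hs : ¬ Sat w φ (i + 1) := h
    obtain ⟨m, hm⟩ := ih w (i + 1) hs
    refine ⟨m + 1, fun v => ?_⟩
    rw [seg_lnext]
    exact hm v
  -- TLG.alw
  · intro φ a ih w i h
    have hs : Sat w (lsu (lnot φ) tt) i := not_not.mp h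
    obtain ⟨k, hik, hk, -⟩ := hs
    have hkφ : ¬ Sat w φ k := hk
    obtain ⟨m, hm⟩ := ih w k hkφ
    have hψtrue : ∃ m, ∀ v : LTL V → Bool, seg w v k m (lnot φ) = true := by
      refine ⟨m + 1, fun v => ?_⟩
      rw [seg_lnot, seg_mono w hm (Nat.le_succ m) v]
      rfl
    obtain ⟨M, hM⟩ := su_true_aux w (lnot φ) tt k hψtrue (k - i) i (by omega)
      (fun j _ _ => ⟨1, fun v => seg_tt w v j 0⟩)
    refine ⟨M + 1, fun v => ?_⟩
    simp only [lG, lF]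
    rw [seg_lnot, seg_mono w hM (Nat.le_succ M) v]
    rfl
  -- TLG.wu
  · intro ψ φ a b ihψ ihφ w i h
    have h1 : ¬ Sat w (lsu ψ φ) i := fun hx => h (Or.inl hx)
    have h2 : ¬ Sat w (lG φ) i := fun hx => h (Or.inr hx)
    have hs : Sat w (lsu (lnot φ) tt) i := not_not.mp h2
    obtain ⟨k', hik', hk', -⟩ := hs
    have hP : ∃ k, i ≤ k ∧ ¬ Sat w φ k := ⟨k', hik', hk'⟩
    set k0 := Nat.find hP with hk0def
    obtain ⟨hik0, hk0φ⟩ := Nat.find_spec hP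
    have hmin : ∀ j, i ≤ j → j < k0 → Sat w φ j := by
      intro j hj1 hj2
      by_contra hcon
      exact Nat.find_min hP hj2 ⟨hj1, hcon⟩
    have hBψ : ∀ j, i ≤ j → j ≤ k0 → ¬ Sat w ψ j := by
      intro j hj1 hj2 hsψ
      exact h1 ⟨j, hj1, hsψ, fun j' a' b' => hmin j' a' (lt_of_lt_of_le b' hj2)⟩
    -- the SU part is eventually false
    obtain ⟨mS, hmS⟩ := su_false_aux w ψ φ k0 (ihφ w k0 hk0φ) (k0 - i) i (by omega)
      (fun j hj1 hj2 => ihψ w j (hBψ j hj1 hj2))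
    -- the G part is eventually false
    obtain ⟨m, hm⟩ := ihφ w k0 hk0φ
    have hψtrue : ∃ m, ∀ v : LTL V → Bool, seg w v k0 m (lnot φ) = true := by
      refine ⟨m + 1, fun v => ?_⟩
      rw [seg_lnot, seg_mono w hm (Nat.le_succ m) v]
      rfl
    obtain ⟨M, hM⟩ := su_true_aux w (lnot φ) tt k0 hψtrue (k0 - i) i (by omega)
      (fun j _ _ => ⟨1, fun v => seg_tt w v j 0⟩)
    have hGfalse : ∀ v : LTL V → Bool, seg w v i (M + 1) (lG φ) = false := by
      intro v
      simp only [lG, lF]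
      rw [seg_lnot, seg_mono w hM (Nat.le_succ M) v]
      rfl
    refine ⟨max mS (M + 1) + 1, fun v => ?_⟩
    simp only [lwu]
    rw [seg_lor,
      seg_mono w hmS (le_trans (le_max_left mS (M + 1)) (Nat.le_succ _)) v,
      seg_mono w hGfalse (le_trans (le_max_right mS (M + 1)) (Nat.le_succ _)) v]
    rfl
  -- TLF.var
  · intro x w i h
    refine ⟨1, fun v => ?_⟩
    rw [seg_var]
    exact decide_eq_true h
  -- TLF.not
  · intro φ a ih w i h
    have hs : ¬ Sat w φ i := h
    obtain ⟨m, hm⟩ := ih w i hs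
    refine ⟨m + 1, fun v => ?_⟩
    rw [seg_lnot, seg_mono w hm (Nat.le_succ m) v]
    rfl
  -- TLF.and
  · intro φ ψ a b ihφ ihψ w i h
    have h1 : Sat w φ i := Classical.byContradiction (fun hx => h (Or.inl hx))
    have h2 : Sat w ψ i := Classical.byContradiction (fun hx => h (Or.inr hx))
    obtain ⟨m1, hm1⟩ := ihφ w i h1
    obtain ⟨m2, hm2⟩ := ihψ w i h2
    refine ⟨max m1 m2 + 1, fun v => ?_⟩
    rw [seg_land,
      seg_mono w hm1 (le_trans (le_max_left m1 m2) (Nat.le_succ _)) v,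
      seg_mono w hm2 (le_trans (le_max_right m1 m2) (Nat.le_succ _)) v]
    rfl
  -- TLF.or
  · intro φ ψ a b ihφ ihψ w i h
    rcases h with h | h
    · obtain ⟨m, hm⟩ := ihφ w i h
      refine ⟨m + 1, fun v => ?_⟩
      rw [seg_lor, seg_mono w hm (Nat.le_succ m) v]
      simp
    · obtain ⟨m, hm⟩ := ihψ w i h
      refine ⟨m + 1, fun v => ?_⟩
      rw [seg_lor, seg_mono w hm (Nat.le_succ m) v]
      simp
  -- TLF.next
  · intro φ a ih w i h
    have hs : Sat w φ (i + 1) := h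
    obtain ⟨m, hm⟩ := ih w (i + 1) hs
    refine ⟨m + 1, fun v => ?_⟩
    rw [seg_lnext]
    exact hm v
  -- TLF.ev
  · intro φ a ih w i h
    have hs : Sat w (lsu φ tt) i := h
    obtain ⟨k, hik, hk, -⟩ := hs
    obtain ⟨M, hM⟩ := su_true_aux w φ tt k (ih w k hk) (k - i) i (by omega)
      (fun j _ _ => ⟨1, fun v => seg_tt w v j 0⟩)
    exact ⟨M, by simpa only [lF] using hM⟩
  -- TLF.su
  · intro ψ φ a b ihψ ihφ w i h
    obtain ⟨k, hik, hk, hall⟩ := h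
    exact su_true_aux w ψ φ k (ihψ w k hk) (k - i) i (by omega)
      (fun j hj1 hj2 => ihφ w j (hall j hj1 hj2))

end LTL

end Aux3

section Aux4

namespace LTL

attribute [local instance 10] Classical.propDecidable

variable {V : Type}

/-- Extend a valuation on the subformulas of `Φ` to all formulas (by `false`). -/
noncomputable def extV (Φ : LTL V) (v : {x // x ∈ subf Φ} → Bool) : LTL V → Bool :=
  fun χ => if h : χ ∈ subf Φ then v ⟨χ, h⟩ else false

/-- Transition function of the deterministic automaton for `Φ`. -/
noncomputable def autoDelta (Φ : LTL V) :
    (({x // x ∈ subf Φ} → Bool) → Bool) → Set V → (({x // x ∈ subf Φ} → Bool) → Bool) :=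
  fun f σ v => f (fun ψ => step ψ.1 σ (extV Φ v))

/-- Initial state of the deterministic automaton for `Φ`. -/
noncomputable def autoInit (Φ : LTL V) : ({x // x ∈ subf Φ} → Bool) → Bool :=
  fun v => v ⟨Φ, mem_subf_self Φ⟩

lemma extV_mem (Φ : LTL V) (v : {x // x ∈ subf Φ} → Bool) {χ : LTL V} (h : χ ∈ subf Φ) :
    extV Φ v χ = v ⟨χ, h⟩ := by
  simp [extV, h]

lemma run_seg (Φ : LTL V) (w : ℕ → Set V) :
    ∀ (t : ℕ) (v : {x // x ∈ subf Φ} → Bool),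
      detRun (autoDelta Φ) (autoInit Φ) w t v = seg w (extV Φ v) 0 t Φ := by
  intro t
  induction t with
  | zero =>
      intro v
      show autoInit Φ v = seg w (extV Φ v) 0 0 Φ
      show v ⟨Φ, mem_subf_self Φ⟩ = extV Φ v Φ
      rw [extV_mem Φ v (mem_subf_self Φ)]
  | succ t ih =>
      intro v
      show autoDelta Φ (detRun (autoDelta Φ) (autoInit Φ) w t) (w t) v =
        seg w (extV Φ v) 0 (t + 1) Φ
      have lhs_eq : autoDelta Φ (detRun (autoDelta Φ) (autoInit Φ) w t) (w t) v =
          detRun (autoDelta Φ) (autoInit Φ) w t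
            (fun ψ => step ψ.1 (w t) (extV Φ v)) := rfl
      rw [lhs_eq, ih]
      have comp := seg_comp w (extV Φ v) 1 t 0 Φ
      have h0t : (0 : ℕ) + t = t := Nat.zero_add t
      rw [show t + 1 = t + 1 from rfl, comp, h0t]
      refine seg_congr w t 0 Φ _ _ (fun ψ hψ => ?_)
      rw [extV_mem Φ _ hψ]
      show step ψ (w t) (extV Φ v) = seg w (extV Φ v) t 1 ψ
      show step ψ (w t) (extV Φ v) = step ψ (w t) (seg w (extV Φ v) (t + 1) 0)
      rfl

lemma run_truth (Φ : LTL V) (w : ℕ → Set V) (t : ℕ) :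
    detRun (autoDelta Φ) (autoInit Φ) w t (fun ψ => decide (Sat w ψ.1 t)) =
      decide (Sat w Φ 0) := by
  rw [run_seg]
  have e2 : seg w (extV Φ (fun ψ => decide (Sat w ψ.1 t))) 0 t Φ =
      seg w (fun χ => decide (Sat w χ t)) 0 t Φ := by
    refine seg_congr w t 0 Φ _ _ (fun ψ hψ => ?_)
    rw [extV_mem Φ _ hψ]
  rw [e2]
  have e3 := seg_truth w t 0 Φ
  simp only [Nat.zero_add] at e3
  exact e3

end LTL

end Aux4


/-- every `TL_F` formula `Φ` is recognized by a deterministic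
ω-automaton with a liveness acceptance condition and at most `2 ^ 2 ^ |Φ|` states. -/
theorem tlF_deterministic_liveness_automaton
    {V : Type} [Fintype V] (Φ : LTL V) (hΦ : LTL.TLF Φ) :
    ∃ (S : Type) (_ : Fintype S) (s0 : S) (δ : S → Set V → S) (F : Set S),
      Fintype.card S ≤ 2 ^ (2 ^ LTL.size Φ) ∧
      ∀ w : ℕ → Set V, ((∃ t, detRun δ s0 w t ∈ F) ↔ LTL.Sat w Φ 0) := by
  classical
  refine ⟨({x // x ∈ LTL.subf Φ} → Bool) → Bool, inferInstance,
    LTL.autoInit Φ, LTL.autoDelta Φ, {f | ∀ v, f v = true}, ?_, ?_⟩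
  · have h1 : Fintype.card ({x // x ∈ LTL.subf Φ} → Bool) = 2 ^ (LTL.subf Φ).card := by
      simp [Fintype.card_fun]
    have h2 : Fintype.card (({x // x ∈ LTL.subf Φ} → Bool) → Bool) =
        2 ^ Fintype.card ({x // x ∈ LTL.subf Φ} → Bool) := by
      simp [Fintype.card_fun]
    rw [h2, h1]
    exact Nat.pow_le_pow_right (by norm_num)
      (Nat.pow_le_pow_right (by norm_num) (LTL.card_subf_le Φ))
  · intro w
    constructor
    · rintro ⟨t, ht⟩
      have hv := ht (fun ψ => decide (LTL.Sat w ψ.1 t))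
      rw [LTL.run_truth Φ w t] at hv
      exact of_decide_eq_true hv
    · intro hsat
      obtain ⟨k, hk⟩ := LTL.tlf_seg_true hΦ w 0 hsat
      refine ⟨k, fun v => ?_⟩
      rw [LTL.run_seg]
      exact hk _
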